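/- Let L : ℝ^P → ℝ^N and L̃ : ℝ^P → ℝ^N be linear maps with L̃ ∘ L* = Id on ℝ^N, where L* is the adjoint of L. Let T₀ ⊆ ℝ^P be a linear subspace and S₀ := T₀⊥. Then ker(P_{S₀} ∘ L*) ⊆ Im(L̃ ∘ P_{T₀}), i.e. the kernel of L_{S₀}* is contained in the image of L̃_{T₀}. -/

import Mathlib

open RealInnerProductSpace

noncomputable section

abbrev Euc (n : ℕ) := EuclideanSpace ℝ (Fin n)

def proj {n : ℕ} (V : Submodule ℝ (Euc n)) : Euc n →L[ℝ] Euc n :=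
  V.subtypeL.comp (V.orthogonalProjectionOnto)

def dualNorm {n : ℕ} (A : Euc n → ℝ) (α : Euc n) : ℝ :=
  sSup {r : ℝ | ∃ v : Euc n, A v ≤ 1 ∧ r = ⟪α, v⟫}

def subdiff {n : ℕ} (f : Euc n → ℝ) (x : Euc n) : Set (Euc n) :=
  {g : Euc n | ∀ y : Euc n, f x + ⟪g, y - x⟫ ≤ f y}

def IsNorm {n : ℕ} (A : Euc n → ℝ) : Prop :=
  (∀ x, A x = 0 ↔ x = 0) ∧ (∀ (c : ℝ) (x : Euc n), A (c • x) = |c| * A x) ∧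
    (∀ x y, A (x + y) ≤ A x + A y)

def Decomposable {n : ℕ} (A : Euc n → ℝ) (u : Euc n) (T : Submodule ℝ (Euc n)) (e : Euc n) :
    Prop :=
  e ∈ T ∧
  subdiff A u = {α : Euc n | proj T α = e ∧ dualNorm A (proj Tᗮ α) ≤ 1} ∧
  ∀ z : Euc n, z ∈ Tᗮ →
    A z = sSup {r : ℝ | ∃ v ∈ (Tᗮ : Submodule ℝ (Euc n)), dualNorm A v ≤ 1 ∧ r = ⟪v, z⟫}

def obj {N M P : ℕ} (Φ : Euc N →L[ℝ] Euc M) (L : Euc P →L[ℝ] Euc N) (A : Euc P → ℝ)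
    (y : Euc M) (lam : ℝ) (x : Euc N) : ℝ :=
  (1/2) * ‖y - Φ x‖^2 + lam * A (ContinuousLinearMap.adjoint L x)

def SC {N M P : ℕ} (Φ : Euc N →L[ℝ] Euc M) (L : Euc P →L[ℝ] Euc N) (A : Euc P → ℝ)
    (x : Euc N) (η : Euc M) (α : Euc P) : Prop :=
  α ∈ subdiff A (ContinuousLinearMap.adjoint L x) ∧
  ContinuousLinearMap.adjoint Φ η = L α ∧
  L α ∈ subdiff (fun z => A (ContinuousLinearMap.adjoint L z)) x

def breg {n : ℕ} (A : Euc n → ℝ) (α u u₀ : Euc n) : ℝ :=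
  A u - A u₀ - ⟪α, u - u₀⟫


lemma proj_eq_starProjection {n : ℕ} (V : Submodule ℝ (Euc n)) : proj V = V.starProjection :=
  rfl

lemma proj_eq_self_iff {n : ℕ} {V : Submodule ℝ (Euc n)} {x : Euc n} : proj V x = x ↔ x ∈ V := by
  rw [proj_eq_starProjection, Submodule.starProjection_eq_self_iff]

lemma proj_orthogonal_eq_zero_iff {n : ℕ} {V : Submodule ℝ (Euc n)} {x : Euc n} :
    proj Vᗮ x = 0 ↔ x ∈ V := by
  rw [proj_eq_starProjection, Submodule.starProjection_apply_eq_zero_iff,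
    Submodule.orthogonal_orthogonal]

theorem stmt14 {N P : ℕ} (L Lt : Euc P →L[ℝ] Euc N)
    (hdual : Lt.comp (ContinuousLinearMap.adjoint L) = ContinuousLinearMap.id ℝ (Euc N))
    (T₀ : Submodule ℝ (Euc P)) :
    ∀ h : Euc N, proj T₀ᗮ (ContinuousLinearMap.adjoint L h) = 0 → ∃ v : Euc P, Lt (proj T₀ v) = h := by
  intro h hh
  refine ⟨ContinuousLinearMap.adjoint L h, ?_⟩
  rw [proj_eq_self_iff.mpr (proj_orthogonal_eq_zero_iff.mp hh)]
  exact DFunLike.congr_fun hdual h
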